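/- The number of ways to iteratively remove all bracket pairs from a nonempty Dyck word — where at each step one removes the current rightmost opening bracket together with some closing bracket to its right, subject to the condition that after each removal the resulting string is still a Dyck word — equals the product of the opening depths of the original word. -/

import Mathlib

/-- Weight of a bracket symbol: open (`true`) counts +1, close (`false`) counts -1. -/
def wt (b : Bool) : ℤ := if b then 1 else -1

/-- Depth after reading the first `k` symbols of `w`. -/
def depth (w : List Bool) (k : ℕ) : ℤ := ((w.take k).map wt).sum

/-- A Dyck word: every prefix sum is nonnegative and the total sum is zero. -/
def IsDyck (w : List Bool) : Prop :=
  (∀ k, 0 ≤ depth w k) ∧ depth w w.length = 0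


/-- Position i holds the last (rightmost) opening bracket of w. -/
def isLastOpen (w : List Bool) (i : ℕ) : Prop :=
  ∃ h : i < w.length, w[i]'h = true ∧
    ∀ j, (hj : j < w.length) → i < j → w[j]'hj = false

/-- A full expulsion route: repeatedly remove the rightmost opening bracket together
with a chosen closing bracket to its right, so that each intermediate word is a
Dyck word, until the empty word is reached. -/
inductive Route : List Bool → Type where
  | nil : Route []
  | cons {w : List Bool} (i j : ℕ) (hij : i < j) (hj : j < w.length)
      (hlast : isLastOpen w i) (hc : w[j]'hj = false)
      (hD : IsDyck ((w.eraseIdx j).eraseIdx i))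
      (r : Route ((w.eraseIdx j).eraseIdx i)) : Route w

/-- The opening depths of a word: the depths attained immediately after each
opening bracket, read left to right. -/
def openingDepths (w : List Bool) : List ℤ :=
  (List.range w.length).filterMap
    (fun k => if w.getD k false = true then some (depth w (k + 1)) else none)

/-!
The rightmost opening bracket of a nonempty Dyck word is followed only by closing brackets:
`w = u ++ true :: replicate m false`, and the Dyck condition forces `depth u u.length = m - 1`,
so the last opening depth of `w` is `m`. Removing that bracket together with any one of the `m`
trailing closing brackets yields the same word `u ++ replicate (m - 1) false`, which is again a
Dyck word and has the opening depths of `w` except the last. Hence `w` has `m` times as many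
routes as that word, and induction on the length gives the product formula.
-/

open List

lemma depth_nil (k : ℕ) : depth [] k = 0 := by simp [depth]

lemma depth_append (u v : List Bool) (k : ℕ) :
    depth (u ++ v) k = depth u k + depth v (k - u.length) := by
  simp [depth, take_append]

lemma depth_append_of_le (u v : List Bool) {k : ℕ} (hk : k ≤ u.length) :
    depth (u ++ v) k = depth u k := by
  rw [depth_append, Nat.sub_eq_zero_of_le hk]
  simp [depth]

lemma depth_of_length_le {w : List Bool} {k : ℕ} (hk : w.length ≤ k) :
    depth w k = depth w w.length := by
  simp [depth, take_of_length_le hk]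

lemma depth_replicate_false (m k : ℕ) : depth (replicate m false) k = -(min k m : ℕ) := by
  simp [depth, wt, take_replicate]

lemma depth_singleton_true {k : ℕ} (hk : 0 < k) : depth [true] k = 1 := by
  obtain ⟨k, rfl⟩ := Nat.exists_eq_add_of_lt hk
  simp [depth, wt]

lemma isDyck_append_replicate_false_iff (v : List Bool) (m : ℕ) :
    IsDyck (v ++ replicate m false) ↔
      (∀ k ≤ v.length, 0 ≤ depth v k) ∧ depth v v.length = m := by
  simp only [IsDyck, depth_append, depth_replicate_false, length_append, length_replicate,
    Nat.add_sub_cancel_left, min_self]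
  constructor
  · rintro ⟨hpre, htot⟩
    refine ⟨fun k hk => by simpa [Nat.sub_eq_zero_of_le hk] using hpre k, ?_⟩
    rw [depth_of_length_le (by omega)] at htot
    omega
  · rintro ⟨hpre, htot⟩
    refine ⟨fun k => ?_, by rw [depth_of_length_le (by omega)]; omega⟩
    rcases le_or_gt k v.length with hk | hk
    · simpa [Nat.sub_eq_zero_of_le hk] using hpre k hk
    · rw [depth_of_length_le hk.le]
      omega

lemma depth_append_true_length (u : List Bool) :
    depth (u ++ [true]) (u ++ [true]).length = depth u u.length + 1 := by
  rw [depth_append, depth_of_length_le (by simp), depth_singleton_true (by simp)]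

lemma isDyck_append_true_replicate_false_iff (u : List Bool) (m : ℕ) :
    IsDyck (u ++ true :: replicate (m + 1) false) ↔ IsDyck (u ++ replicate m false) := by
  rw [← singleton_append, ← append_assoc, isDyck_append_replicate_false_iff,
    isDyck_append_replicate_false_iff, depth_append_true_length]
  constructor
  · rintro ⟨hpre, htot⟩
    refine ⟨fun k hk => depth_append_of_le u [true] hk ▸ hpre k (by simp; omega), ?_⟩
    push_cast at htot
    omega
  · rintro ⟨hpre, htot⟩
    refine ⟨fun k hk => ?_, by push_cast; omega⟩
    rcases hk.lt_or_eq with hk | rfl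
    · simp only [length_append, length_singleton, Nat.lt_succ_iff] at hk
      exact depth_append_of_le u [true] hk ▸ hpre k hk
    · rw [depth_append_true_length]
      omega

lemma not_isDyck_append_true (u : List Bool) : ¬ IsDyck (u ++ [true]) := by
  rintro ⟨hpre, htot⟩
  have := hpre u.length
  rw [depth_append_true_length] at htot
  rw [depth_append_of_le u [true] le_rfl] at this
  omega

lemma eq_zero_of_isDyck_replicate_false {m : ℕ} (h : IsDyck (replicate m false)) : m = 0 := by
  have := ((isDyck_append_replicate_false_iff [] m).1 h).2
  rw [depth_nil] at this
  omega

lemma eq_replicate_false_or_eq_append_true_replicate_false (w : List Bool) :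
    (∃ m, w = replicate m false) ∨ ∃ u m, w = u ++ true :: replicate m false := by
  induction w using List.reverseRecOn with
  | nil => exact .inl ⟨0, rfl⟩
  | append_singleton v b ih =>
    cases b
    · rcases ih with ⟨m, rfl⟩ | ⟨u, m, rfl⟩
      · exact .inl ⟨m + 1, by simp [replicate_succ']⟩
      · exact .inr ⟨u, m + 1, by simp [replicate_succ']⟩
    · exact .inr ⟨v, 0, rfl⟩

lemma isLastOpen_append_true_replicate_false (u : List Bool) (m : ℕ) :
    isLastOpen (u ++ true :: replicate m false) u.length := by
  refine ⟨by simp, by simp, fun j hj hij => ?_⟩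
  rw [getElem_append_right (by omega)]
  obtain ⟨t, rfl⟩ := Nat.exists_eq_add_of_lt hij
  simp [show u.length + t + 1 - u.length = t + 1 by omega]

lemma isLastOpen_unique {w : List Bool} {i i' : ℕ}
    (h : isLastOpen w i) (h' : isLastOpen w i') : i = i' := by
  obtain ⟨hi, ho, hl⟩ := h
  obtain ⟨hi', ho', hl'⟩ := h'
  by_contra hne
  rcases Nat.lt_or_gt_of_ne hne with hlt | hlt
  · exact absurd (hl i' hi' hlt) (by simp [ho'])
  · exact absurd (hl' i hi hlt) (by simp [ho])

lemma eraseIdx_eraseIdx_append_true_replicate_false (u : List Bool) {m j : ℕ}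
    (hj : u.length < j) (hjm : j < (u ++ true :: replicate (m + 1) false).length) :
    ((u ++ true :: replicate (m + 1) false).eraseIdx j).eraseIdx u.length
      = u ++ replicate m false := by
  rw [← singleton_append, ← append_assoc, eraseIdx_append_of_length_le (by simp; omega),
    eraseIdx_replicate, if_pos (by simp at hjm ⊢; omega)]
  simp [eraseIdx_append_of_length_le]

lemma openingDepths_append_singleton (u : List Bool) (b : Bool) :
    openingDepths (u ++ [b]) = openingDepths u ++ if b then [depth u u.length + 1] else [] := by
  have hprefix : ∀ k ∈ range u.length,
      (if (u ++ [b]).getD k false = true then some (depth (u ++ [b]) (k + 1)) else none) =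
        if u.getD k false = true then some (depth u (k + 1)) else none := fun k hk => by
    rw [mem_range] at hk
    rw [getD_append _ _ _ _ hk, depth_append_of_le u [b] hk]
  have hdepth : depth (u ++ [b]) (u.length + 1) = depth u u.length + wt b := by
    simp [depth]
  unfold openingDepths
  rw [length_append, length_singleton, range_succ, filterMap_append, filterMap_congr hprefix]
  cases b <;> simp [hdepth, wt]

lemma openingDepths_append_replicate_false (u : List Bool) (m : ℕ) :
    openingDepths (u ++ replicate m false) = openingDepths u := by
  induction m with
  | zero => simp
  | succ m ih =>
    rw [replicate_succ', ← append_assoc, openingDepths_append_singleton, ih]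
    simp

lemma openingDepths_append_true_replicate_false (u : List Bool) (m : ℕ) :
    openingDepths (u ++ true :: replicate m false) = openingDepths u ++ [depth u u.length + 1] := by
  rw [← singleton_append, ← append_assoc, openingDepths_append_replicate_false,
    openingDepths_append_singleton, if_pos rfl]

instance : Unique (Route []) where
  default := .nil
  uniq r := by
    cases r with
    | nil => rfl
    | cons i j hij hj => simp at hj

lemma card_route_of_isLastOpen {w w' : List Bool} {i : ℕ} (hlast : isLastOpen w i)
    (herase : ∀ j, i < j → j < w.length → (w.eraseIdx j).eraseIdx i = w')
    (hD' : IsDyck w') :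
    Nat.card (Route w) = (w.length - i - 1) * Nat.card (Route w') := by
  let g : {j : ℕ // i < j ∧ j < w.length} × Route w' → Route w := fun ⟨⟨j, hij, hj⟩, r⟩ =>
    .cons i j hij hj hlast (hlast.2.2 j hj hij) (herase j hij hj ▸ hD')
      ((herase j hij hj).symm ▸ r)
  have hg : Function.Bijective g := by
    constructor
    · rintro ⟨⟨j₁, hij₁, hj₁⟩, r₁⟩ ⟨⟨j₂, hij₂, hj₂⟩, r₂⟩ h
      injection h with _ _ hj hr
      subst hj
      exact Prod.ext rfl (eq_of_heq ((eqRec_heq _ _).symm.trans (hr.trans (eqRec_heq _ _))))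
    · intro r
      cases r with
      | nil => exact absurd hlast.1 (by simp)
      | cons i' j hij hj hlast' _ _ r =>
        obtain rfl := isLastOpen_unique hlast' hlast
        obtain rfl := herase j hij hj
        exact ⟨⟨⟨j, hij, hj⟩, r⟩, rfl⟩
  rw [← Nat.card_eq_of_bijective g hg, Nat.card_prod]
  congr 1
  exact (Nat.card_coe_set_eq (Set.Ioo i w.length)).trans (by simp)

lemma card_route_append_true_replicate_false {u : List Bool} {m : ℕ}
    (hD : IsDyck (u ++ replicate m false)) :
    Nat.card (Route (u ++ true :: replicate (m + 1) false)) =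
      (m + 1) * Nat.card (Route (u ++ replicate m false)) := by
  rw [card_route_of_isLastOpen (isLastOpen_append_true_replicate_false u (m + 1))
    (fun j => eraseIdx_eraseIdx_append_true_replicate_false u) hD]
  simp

theorem card_routes_eq_prod_openingDepths_general (S : List Bool) (hS : IsDyck S) :
    (Nat.card (Route S) : ℤ) = (openingDepths S).prod := by
  induction hn : S.length using Nat.strong_induction_on generalizing S with
  | _ n ih =>
  rcases eq_replicate_false_or_eq_append_true_replicate_false S with ⟨m, rfl⟩ | ⟨u, m, rfl⟩
  · obtain rfl := eq_zero_of_isDyck_replicate_false hS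
    simp [openingDepths]
  rcases m with _ | m
  · exact absurd hS (not_isDyck_append_true u)
  rw [isDyck_append_true_replicate_false_iff] at hS
  have hdepth : depth u u.length = m := ((isDyck_append_replicate_false_iff u m).1 hS).2
  have hlt : (u ++ replicate m false).length < n := by simp [← hn]
  rw [card_route_append_true_replicate_false hS, openingDepths_append_true_replicate_false,
    prod_append, prod_singleton, hdepth, ← openingDepths_append_replicate_false u m,
    ← ih _ hlt _ hS rfl]
  push_cast
  ring

/-- The number of full expulsion routes of a nonempty Dyck word equals the
product of its opening depths. -/
theorem card_routes_eq_prod_openingDepths (S : List Bool) (hne : S ≠ [])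
    (hS : IsDyck S) :
    (Nat.card (Route S) : ℤ) = (openingDepths S).prod :=
  card_routes_eq_prod_openingDepths_general S hS
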